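/- For every nonnegative integer m, setting a = -1/3 - m (so 3a+1 = -3m and 3a = -1-3m), the terminating hypergeometric sum satisfies ∑_{n=0}^{3m} [(a)_n (3a+1)_n / ((3a)_n · n!)] · (3/2)^n = (-3)^{3m} (1/3)_m (5/3)_{2m} / (2^{3m} (2)_{3m}). -/

import Mathlib

/-!
Since `c (c + 1)_n = (c)_n (c + n)`, the series `₂F₁(a, c + 1; c; x)` has terms
`(a)_n (c + n) xⁿ / (c n!)`. When `(x - 1) c = x a` these telescope: they are the differences of
`n (a)_n xⁿ / ((x - 1) c n!)`. Here `x = 3/2` and `c = 3a`, so the sum is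
`(3m + 1) (a)_{3m+1} (3/2)^{3m+1} / ((1/2) (3a) (3m + 1)!)`, and for `a = -1/3 - m` the product
`(a)_{3m+1}` splits into the negative factors `(-1)^{m+1} (1/3)_{m+1}` and the positive ones
`(2/3)_{2m}`.
-/

open Finset Polynomial
open scoped Nat

section CommRing

variable {R : Type*} [CommRing R]

theorem mul_ascPochhammer_eval_add_one (n : ℕ) (x : R) :
    x * (ascPochhammer R n).eval (x + 1) = (ascPochhammer R n).eval x * (x + n) := by
  rw [← ascPochhammer_succ_eval, ascPochhammer_succ_left, eval_mul, eval_X, eval_comp, eval_add,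
    eval_X, eval_one]

theorem ascPochhammer_eval_add (x : R) (n k : ℕ) :
    (ascPochhammer R (n + k)).eval x =
      (ascPochhammer R n).eval x * (ascPochhammer R k).eval (x + n) := by
  rw [← ascPochhammer_mul, eval_mul, eval_comp, eval_add, eval_X, eval_natCast]

theorem ascPochhammer_eval_neg_sub_add_one (x : R) (n : ℕ) :
    (ascPochhammer R n).eval (-x - n + 1) = (-1) ^ n * (ascPochhammer R n).eval x := by
  rw [show -x - n + 1 = -(x + n - 1) by ring, ascPochhammer_eval_neg_eq_descPochhammer,
    descPochhammer_eval_eq_ascPochhammer, show x + n - 1 - n + 1 = x by ring]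

end CommRing

section Field

variable {K : Type*} [Field K] [CharZero K]

theorem sub_one_mul_sum_range_ascPochhammer_eq {a c x : K} (hc : (x - 1) * c = x * a) (N : ℕ) :
    (x - 1) * ∑ n ∈ range N, (ascPochhammer K n).eval a * (c + n) * x ^ n / n !
      = N * (ascPochhammer K N).eval a * x ^ N / N ! := by
  induction N with
  | zero => simp
  | succ N ih =>
    rw [sum_range_succ, mul_add, ih, ascPochhammer_succ_eval, Nat.factorial_succ]
    push_cast
    field_simp
    linear_combination (ascPochhammer K N).eval a * x ^ N / N ! * hc

theorem sum_range_hypergeometric_eq {a c x : K} (hc : (x - 1) * c = x * a) (hx : x ≠ 1)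
    (hc0 : c ≠ 0) {N : ℕ} (hcN : ∀ n < N, (ascPochhammer K n).eval c ≠ 0) :
    ∑ n ∈ range N, (ascPochhammer K n).eval a * (ascPochhammer K n).eval (c + 1) /
        ((ascPochhammer K n).eval c * n !) * x ^ n
      = N * (ascPochhammer K N).eval a * x ^ N / ((x - 1) * c * N !) := by
  have hx1 : x - 1 ≠ 0 := sub_ne_zero.mpr hx
  calc _ = (∑ n ∈ range N, (ascPochhammer K n).eval a * (c + n) * x ^ n / n !) / c := by
        rw [sum_div]
        refine sum_congr rfl fun n hn => ?_
        have hcn := hcN n (mem_range.mp hn)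
        field_simp
        rw [mul_assoc _ c, mul_ascPochhammer_eval_add_one]
        ring
    _ = _ := by
      field_simp
      linear_combination sub_one_mul_sum_range_ascPochhammer_eq hc N

theorem ascPochhammer_eval_neg_one_third_sub (m : ℕ) :
    (ascPochhammer K (3 * m + 1)).eval (-1/3 - (m : K)) =
      (-1) ^ (m + 1) * (ascPochhammer K m).eval (1/3) *
        (ascPochhammer K (2 * m)).eval (5/3) / 3 := by
  have split : (ascPochhammer K (3 * m + 1)).eval (-1/3 - (m : K)) = (-1) ^ (m + 1) *
      (ascPochhammer K (m + 1)).eval (1/3) * (ascPochhammer K (2 * m)).eval (2/3) := by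
    rw [show 3 * m + 1 = (m + 1) + 2 * m by ring, ascPochhammer_eval_add]
    have reflect := ascPochhammer_eval_neg_sub_add_one (1/3 : K) (m + 1)
    push_cast at reflect ⊢
    rw [show -1/3 - (m : K) = -(1/3) - (m + 1) + 1 by ring, reflect,
      show -(1/3) - ((m : K) + 1) + 1 + (m + 1) = 2/3 by ring]
  have shift := mul_ascPochhammer_eval_add_one (2 * m) (2/3 : K)
  rw [show (2/3 : K) + 1 = 5/3 by norm_num] at shift
  push_cast at shift
  rw [split, ascPochhammer_succ_eval]
  field_simp
  linear_combination (-3/2 * (ascPochhammer K m).eval (1/3)) * shift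

end Field

/-- Formula (1,3,3-3)(i), case `a = -1/3-m`:
`₂F₁(a, 3a+1; 3a; 3/2) = (-3)^{3m} (1/3)_m (5/3)_{2m} / (2^{3m} (2)_{3m})`. -/
theorem case1_third (m : ℕ) :
    ∑ n ∈ Finset.range (3 * m + 1),
      ((ascPochhammer ℚ n).eval (-1/3 - (m : ℚ)) *
        (ascPochhammer ℚ n).eval (3 * (-1/3 - (m : ℚ)) + 1) /
        ((ascPochhammer ℚ n).eval (3 * (-1/3 - (m : ℚ))) * (n.factorial : ℚ))) * (3 / 2 : ℚ) ^ n
    = (-3 : ℚ) ^ (3 * m) * (ascPochhammer ℚ m).eval (1/3 : ℚ) *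
        (ascPochhammer ℚ (2 * m)).eval (5/3 : ℚ) /
        ((2 : ℚ) ^ (3 * m) * (ascPochhammer ℚ (3 * m)).eval (2 : ℚ)) := by
  have hc : 3 * (-1/3 - (m : ℚ)) = -((3 * m + 1 : ℕ) : ℚ) := by push_cast; ring
  have hc0 : 3 * (-1/3 - (m : ℚ)) ≠ 0 := by rw [hc, neg_ne_zero, Nat.cast_ne_zero]; omega
  have hcN : ∀ n < 3 * m + 1, (ascPochhammer ℚ n).eval (3 * (-1/3 - (m : ℚ))) ≠ 0 := by
    intro n hn
    rw [hc, Ne, ascPochhammer_eval_eq_zero_iff]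
    rintro ⟨k, hk, hk'⟩
    rw [neg_neg, Nat.cast_inj] at hk'
    omega
  have hfac : (ascPochhammer ℚ (3 * m)).eval 2 = ((3 * m + 1) ! : ℚ) := by
    simpa [add_comm, one_add_one_eq_two] using factorial_mul_ascPochhammer ℚ 1 (3 * m)
  have hx : (3 / 2 : ℚ) ^ (3 * m + 1) = (27 / 8) ^ m * (3 / 2) := by
    rw [pow_succ, pow_mul]; norm_num
  have hsign : (-3 : ℚ) ^ (3 * m) = (-1) ^ m * 27 ^ m := by
    rw [pow_mul, ← mul_pow]; norm_num
  rw [sum_range_hypergeometric_eq (by ring) (by norm_num) hc0 hcN,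
    ascPochhammer_eval_neg_one_third_sub, hfac, hc, hx, hsign, pow_mul, div_pow]
  field_simp
  ring
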